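/- arXiv:2007.11908 — 3 statements merged into one kernel-verified Lean document; each statement's English description precedes it below -/
import Mathlib

section
/- Let λ₂ be the Leibniz algebra on ℂ³ with bracket [e₁,e₁] = e₃, and let B be the bilinear form on ℂ³ defined on the standard basis by B(e₁,e₃) = B(e₃,e₁) = 1, B(e₂,e₂) = 1, and all other basis values 0. Then B is symmetric, nondegenerate, and invariant for the bracket of λ₂. In particular λ₂ is a metric Leibniz algebra. -/
/-- The bracket of the Leibniz algebra `λ₂` on `ℂ³`: `[e₁,e₁] = e₃`,
all other basis brackets zero, in coordinates. -/
def lambda2Bracket (x y : Fin 3 → ℂ) : Fin 3 → ℂ := ![0, 0, x 0 * y 0]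

/-- The bilinear form `B` on `ℂ³` with `B(e₁,e₃) = B(e₃,e₁) = 1`,
`B(e₂,e₂) = 1`, all other basis values `0`, in coordinates. -/
def lambda2Form (x y : Fin 3 → ℂ) : ℂ := x 0 * y 2 + x 2 * y 0 + x 1 * y 1

/-- `B` is symmetric, nondegenerate and invariant for the bracket of `λ₂`;
in particular `λ₂` is a metric Leibniz algebra. -/
theorem lambda2_is_metric :
    (∀ x y : Fin 3 → ℂ, lambda2Form x y = lambda2Form y x) ∧
    (∀ v : Fin 3 → ℂ, (∀ w : Fin 3 → ℂ, lambda2Form v w = 0) → v = 0) ∧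
    (∀ x y z : Fin 3 → ℂ,
      lambda2Form (lambda2Bracket x y) z = lambda2Form x (lambda2Bracket y z)) := by
  refine ⟨fun x y => by simp [lambda2Form]; ring, ?_, fun x y z => by
    simp [lambda2Form, lambda2Bracket]; ring⟩
  intro v h
  funext i
  fin_cases i
  · have := h ![0, 0, 1]; simpa [lambda2Form] using this
  · have := h ![0, 1, 0]; simpa [lambda2Form] using this
  · have := h ![1, 0, 0]; simpa [lambda2Form] using this
end

section
/- Let 𝔏₂ be the algebra on ℂ⁴ with bracket [e₁,e₂] = e₃, [e₂,e₁] = −e₃, [e₁,e₄] = e₁, [e₄,e₁] = −e₁, [e₄,e₂] = e₂, [e₂,e₄] = −e₂, [e₄,e₄] = e₃. Then this bracket satisfies both the left and the right Leibniz identity (so 𝔏₂ is a symmetric Leibniz algebra, and it is not a Lie algebra since [e₄,e₄] ≠ 0), and the bilinear form B on ℂ⁴ defined by B(e₁,e₂) = B(e₂,e₁) = 1, B(e₃,e₄) = B(e₄,e₃) = −1, all other basis values 0, is symmetric, nondegenerate and invariant for this bracket. In particular 𝔏₂ is a metric Leibniz algebra. -/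
/-- The bracket of the algebra `𝔏₂` on `ℂ⁴`: `[e₁,e₂] = e₃`, `[e₂,e₁] = -e₃`,
`[e₁,e₄] = e₁`, `[e₄,e₁] = -e₁`, `[e₄,e₂] = e₂`, `[e₂,e₄] = -e₂`,
`[e₄,e₄] = e₃`, all other basis brackets zero, in coordinates. -/
def L2Bracket (x y : Fin 4 → ℂ) : Fin 4 → ℂ :=
  ![x 0 * y 3 - x 3 * y 0,
    x 3 * y 1 - x 1 * y 3,
    x 0 * y 1 - x 1 * y 0 + x 3 * y 3,
    0]

/-- The bilinear form `B` on `ℂ⁴` with `B(e₁,e₂) = B(e₂,e₁) = 1`,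
`B(e₃,e₄) = B(e₄,e₃) = -1`, all other basis values `0`, in coordinates. -/
def L2Form (x y : Fin 4 → ℂ) : ℂ := x 0 * y 1 + x 1 * y 0 - x 2 * y 3 - x 3 * y 2

/-- The bracket of `𝔏₂` satisfies both the left and the right Leibniz identity
(so `𝔏₂` is a symmetric Leibniz algebra, and not a Lie algebra since
`[e₄,e₄] ≠ 0`), and `B` is a symmetric, nondegenerate, invariant bilinear form
for it.  In particular `𝔏₂` is a metric Leibniz algebra. -/
theorem L2_is_metric :
    (∀ x y z : Fin 4 → ℂ,
      L2Bracket x (L2Bracket y z) =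
        L2Bracket (L2Bracket x y) z + L2Bracket y (L2Bracket x z)) ∧
    (∀ x y z : Fin 4 → ℂ,
      L2Bracket x (L2Bracket y z) =
        L2Bracket (L2Bracket x y) z - L2Bracket (L2Bracket x z) y) ∧
    L2Bracket ![0, 0, 0, 1] ![0, 0, 0, 1] ≠ 0 ∧
    (∀ x y : Fin 4 → ℂ, L2Form x y = L2Form y x) ∧
    (∀ v : Fin 4 → ℂ, (∀ w : Fin 4 → ℂ, L2Form v w = 0) → v = 0) ∧
    (∀ x y z : Fin 4 → ℂ, L2Form (L2Bracket x y) z = L2Form x (L2Bracket y z)) := by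
  refine ⟨?_, ?_, ?_, ?_, ?_, ?_⟩
  · intro x y z
    funext i
    fin_cases i <;>
      simp [L2Bracket, Pi.add_apply] <;> ring
  · intro x y z
    funext i
    fin_cases i <;>
      simp [L2Bracket, Pi.sub_apply] <;> ring
  · intro h
    have := congrFun h 2
    simp [L2Bracket] at this
  · intro x y
    simp [L2Form]; ring
  · intro v h
    funext i
    have h0 := h ![0, 1, 0, 0]
    have h1 := h ![1, 0, 0, 0]
    have h2 := h ![0, 0, 0, -1]
    have h3 := h ![0, 0, -1, 0]
    simp [L2Form] at h0 h1 h2 h3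
    fin_cases i <;> simp [h0, h1, h2, h3]
  · intro x y z
    simp [L2Form, L2Bracket]; ring
end

section
/- For every t ∈ ℂ with t ≠ 0, the bracket on ℂ⁵ defined by [e₃,e₄] = e₂, [e₄,e₃] = −e₂, [e₃,e₅] = e₁ + t·e₄, [e₅,e₃] = −e₁ − t·e₄, [e₄,e₅] = e₃, [e₅,e₄] = −e₃ (the deformation of the nilpotent Lie algebra W₃ along the 2-cocycle φ₁(e₃,e₅) = e₄, φ₁(e₅,e₃) = −e₄) is isomorphic to the Lie algebra 𝔡 ⊕ ℂ on ℂ⁵ with bracket [e₁,e₂] = e₃, [e₂,e₁] = −e₃, [e₁,e₃] = −e₂, [e₃,e₁] = e₂, [e₂,e₃] = e₄, [e₃,e₂] = −e₄, and all brackets involving e₅ equal to zero. -/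
/-- The deformation of the nilpotent Lie algebra `W₃` on `ℂ⁵` along the
2-cocycle `φ₁(e₃,e₅) = e₄`, `φ₁(e₅,e₃) = -e₄`: the brackets `[e₃,e₄] = e₂`,
`[e₄,e₃] = -e₂`, `[e₃,e₅] = e₁ + t·e₄`, `[e₅,e₃] = -e₁ - t·e₄`,
`[e₄,e₅] = e₃`, `[e₅,e₄] = -e₃`, in coordinates. -/
def W3Deformed1 (t : ℂ) (x y : Fin 5 → ℂ) : Fin 5 → ℂ :=
  ![x 2 * y 4 - x 4 * y 2,
    x 2 * y 3 - x 3 * y 2,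
    x 3 * y 4 - x 4 * y 3,
    t * (x 2 * y 4 - x 4 * y 2),
    0]

/-- The bracket of the Lie algebra `𝔡 ⊕ ℂ` on `ℂ⁵`: `[e₁,e₂] = e₃`,
`[e₂,e₁] = -e₃`, `[e₁,e₃] = -e₂`, `[e₃,e₁] = e₂`, `[e₂,e₃] = e₄`,
`[e₃,e₂] = -e₄`, all brackets involving `e₅` zero, in coordinates. -/
def diamondPlusC (x y : Fin 5 → ℂ) : Fin 5 → ℂ :=
  ![0,
    x 2 * y 0 - x 0 * y 2,
    x 0 * y 1 - x 1 * y 0,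
    x 1 * y 2 - x 2 * y 1,
    0]

set_option maxHeartbeats 1000000 in
/-- For every `t ≠ 0`, the deformation of `W₃` along the 2-cocycle
`φ₁(e₃,e₅) = e₄`, `φ₁(e₅,e₃) = -e₄` is isomorphic to `𝔡 ⊕ ℂ`. -/
theorem W3_deformation1_iso_diamondPlusC :
    ∀ t : ℂ, t ≠ 0 →
      ∃ T : (Fin 5 → ℂ) ≃ₗ[ℂ] (Fin 5 → ℂ),
        ∀ x y : Fin 5 → ℂ, T (W3Deformed1 t x y) = diamondPlusC (T x) (T y) := by
  intro t ht
  obtain ⟨s, hs⟩ : ∃ s : ℂ, s * s = t := by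
    refine ⟨t ^ ((1:ℂ)/2), ?_⟩
    rw [← Complex.cpow_add _ _ ht]
    norm_num
  subst hs
  have hsne : s ≠ 0 := fun h => ht (by simp [h])
  refine ⟨{ toFun := fun x => ![-Complex.I * s * x 4, x 2, Complex.I / s * x 3,
              Complex.I / s * x 1, x 0 - x 3 / (s * s)],
            invFun := fun y => ![y 4 - Complex.I / s * y 2, -Complex.I * s * y 3,
              y 1, -Complex.I * s * y 2, Complex.I / s * y 0],
            map_add' := ?_, map_smul' := ?_, left_inv := ?_, right_inv := ?_ }, ?_⟩
  · intro x y
    funext i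
    fin_cases i <;> simp <;> ring
  · intro c x
    funext i
    fin_cases i <;> simp <;> ring
  · intro x
    funext i
    fin_cases i <;> simp <;>
      first
        | ring1
        | (ring_nf; (try simp only [Complex.I_sq]); (try field_simp); (try ring1))
  · intro y
    funext i
    fin_cases i <;> simp <;>
      first
        | ring1
        | (ring_nf; (try simp only [Complex.I_sq]); (try field_simp); (try ring1))
  · intro x y
    simp only [LinearEquiv.coe_mk, LinearMap.coe_mk, AddHom.coe_mk, W3Deformed1, diamondPlusC]
    funext i
    fin_cases i <;> simp <;>
      first
        | ring1
        | (ring_nf; (try simp only [Complex.I_sq]); (try field_simp); (try ring1))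
end
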